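/- arXiv:1906.05764 — 2 statements merged into one kernel-verified Lean document; each statement's English description precedes it below -/
import Mathlib

section
/- Let n ≥ 4 and let T be a triangulation of a convex (n+2)-gon. Then 2^(n−2) ≤ ∏_{i ∈ ℤ/(n+2)} catalan (deg_T i), and (∏_{i ∈ ℤ/(n+2)} catalan (deg_T i))^2 ≤ 2^(5n−14) (i.e. the product is at most 2^{(5/2)n − 7}). -/
/-- We label the vertices of a convex `m`-gon by `Fin m` in cyclic order, and
represent a diagonal by the ordered pair of its endpoints, smaller label first.
`p` is a diagonal if its endpoints are distinct and non-adjacent in the cyclic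
order. -/
def IsDiagonal (m : ℕ) (p : Fin m × Fin m) : Prop :=
  (p.1 : ℕ) + 1 < (p.2 : ℕ) ∧ ¬((p.1 : ℕ) = 0 ∧ (p.2 : ℕ) + 1 = m)

/-- Two diagonals (each given with its smaller endpoint first) cross iff exactly
one endpoint of each lies strictly between the two endpoints of the other in the
cyclic order; for pairs ordered as above this is expressed by the following two
"exactly one" (Xor) conditions, which amount to the four endpoints being
distinct and alternating around the polygon. -/
def Crosses (m : ℕ) (p q : Fin m × Fin m) : Prop :=
  Xor' (p.1 < q.1 ∧ q.1 < p.2) (p.1 < q.2 ∧ q.2 < p.2) ∧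
  Xor' (q.1 < p.1 ∧ p.1 < q.2) (q.1 < p.2 ∧ p.2 < q.2)

/-- `T` is a triangulation of the convex `m`-gon: a maximal set of pairwise
non-crossing diagonals. -/
def IsTriangulation (m : ℕ) (T : Finset (Fin m × Fin m)) : Prop :=
  (∀ p ∈ T, IsDiagonal m p) ∧
  (∀ p ∈ T, ∀ q ∈ T, ¬ Crosses m p q) ∧
  (∀ q : Fin m × Fin m, IsDiagonal m q → q ∉ T → ∃ p ∈ T, Crosses m p q)

/-- The degree of vertex `i` in `T`: the number of diagonals of `T` containing `i`. -/
def degT {m : ℕ} (T : Finset (Fin m × Fin m)) (i : Fin m) : ℕ :=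
  (T.filter (fun p => p.1 = i ∨ p.2 = i)).card

/-!
A triangulation has `n - 1` diagonals, so the degrees `d i` sum to `2n - 2`, and it has at least two
ears (vertices of degree `0`).

Lower bound: `2 ^ d ≤ 2 * catalan d` for `d ≥ 1`, hence `2 ^ (2n - 2) ≤ 2 ^ n * ∏ catalan (d i)`.

Upper bound: `8 * catalan d ≤ 4 ^ d` for `d ≥ 2` gives
`catalan d ^ 2 * 2 ^ (3 + charge d) ≤ 2 ^ (4 d + 3 [d = 0])`, so it suffices that the total charge
is at least three per ear. Going around the polygon, an ear is never followed by another ear, nor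
by one or two vertices of degree one and then an ear, so every ear collects charge `3` from the
vertices before the next ear. These local facts are checked after rotating the ear to vertex `1`.
-/

open Finset

section Catalan

theorem succ_succ_mul_catalan_succ (d : ℕ) :
    (d + 2) * catalan (d + 1) = 2 * (2 * d + 1) * catalan d := by
  have key : (d + 1) * ((d + 2) * catalan (d + 1)) = (d + 1) * (2 * (2 * d + 1) * catalan d) := by
    calc (d + 1) * ((d + 2) * catalan (d + 1))
        = (d + 1) * (d + 1).centralBinom := by rw [← succ_mul_catalan_eq_centralBinom]
      _ = 2 * (2 * d + 1) * d.centralBinom := Nat.succ_mul_centralBinom_succ d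
      _ = (d + 1) * (2 * (2 * d + 1) * catalan d) := by
        rw [← succ_mul_catalan_eq_centralBinom]; ring
  exact Nat.eq_of_mul_eq_mul_left d.succ_pos key

theorem two_mul_catalan_le_catalan_succ {d : ℕ} (hd : 1 ≤ d) :
    2 * catalan d ≤ catalan (d + 1) := by
  have h := succ_succ_mul_catalan_succ d
  have : (d + 2) * (2 * catalan d) ≤ (d + 2) * catalan (d + 1) := by
    rw [h]; nlinarith
  exact Nat.le_of_mul_le_mul_left this (by omega)

theorem catalan_succ_le_four_mul_catalan (d : ℕ) : catalan (d + 1) ≤ 4 * catalan d := by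
  have h := succ_succ_mul_catalan_succ d
  have : (d + 2) * catalan (d + 1) ≤ (d + 2) * (4 * catalan d) := by
    rw [h]; nlinarith
  exact Nat.le_of_mul_le_mul_left this (by omega)

theorem two_pow_le_two_mul_catalan {d : ℕ} (hd : 1 ≤ d) : 2 ^ d ≤ 2 * catalan d := by
  induction d, hd using Nat.le_induction with
  | base => simp [catalan_one]
  | succ d hd ih =>
    have := two_mul_catalan_le_catalan_succ hd
    rw [pow_succ]; omega

theorem eight_mul_catalan_le_four_pow {d : ℕ} (hd : 2 ≤ d) : 8 * catalan d ≤ 4 ^ d := by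
  induction d, hd using Nat.le_induction with
  | base => simp [catalan_two]
  | succ d hd ih =>
    have := catalan_succ_le_four_mul_catalan d
    rw [pow_succ]; omega

end Catalan

/-- Chosen so that `catalan_sq_mul_two_pow_le` holds and every ear can collect `3`. -/
def charge (d : ℕ) : ℕ := if d = 0 then 0 else if d = 1 then 1 else 3

section Discharging

variable {G : Type*} [AddGroup G] (d : G → ℕ) (s : G)

def collected (v : G) : ℕ :=
  charge (d (v + s)) + (if d (v + s) = 1 then charge (d (v + s + s)) else 0) +
    (if d (v + s) = 1 ∧ d (v + s + s) = 1 then charge (d (v + s + s + s)) else 0)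

/-- Each vertex `u` pays its charge to at most one ear: to `u - s`, or to `u - 2 s` across a vertex of
degree one, or to `u - 3 s` across two; these cases exclude each other. -/
theorem sum_collected_le_sum_charge [Fintype G] :
    ∑ v, (if d v = 0 then collected d s v else 0) ≤ ∑ u, charge (d u) := by
  have shift (f : G → ℕ) : ∑ v, f (v + s) = ∑ u, f u := Equiv.sum_comp (Equiv.addRight s) f
  let A u := if d (u - s) = 0 then charge (d u) else 0
  let B u := if d (u - s - s) = 0 ∧ d (u - s) = 1 then charge (d u) else 0
  let C u := if d (u - s - s - s) = 0 ∧ d (u - s - s) = 1 ∧ d (u - s) = 1 then charge (d u) else 0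
  calc ∑ v, (if d v = 0 then collected d s v else 0)
      = ∑ v, (A (v + s) + B (v + s + s) + C (v + s + s + s)) := by
        refine sum_congr rfl fun v _ => ?_
        simp only [A, B, C, collected, add_sub_cancel_right]
        split_ifs <;> simp_all
    _ = ∑ u, (A u + B u + C u) := by
        rw [sum_add_distrib, sum_add_distrib, shift A, shift (fun w => B (w + s)), shift B,
          shift (fun w => C (w + s + s)), shift (fun w => C (w + s)), shift C,
          ← sum_add_distrib, ← sum_add_distrib]
    _ ≤ ∑ u, charge (d u) := sum_le_sum fun u _ => by
        simp only [A, B, C]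
        split_ifs <;> omega

variable {d s}

theorem three_le_collected (h1 : ∀ v, d v = 0 → d (v + s) ≠ 0)
    (h2 : ∀ v, d v = 0 → d (v + s) = 1 → d (v + s + s) ≠ 0)
    (h3 : ∀ v, d v = 0 → d (v + s) = 1 → d (v + s + s) = 1 → d (v + s + s + s) ≠ 0)
    {v : G} (hv : d v = 0) : 3 ≤ collected d s v := by
  have := h1 v hv
  have := h2 v hv
  have := h3 v hv
  unfold collected charge
  split_ifs <;> omega

theorem sum_ite_three_le_sum_charge [Fintype G] (h1 : ∀ v, d v = 0 → d (v + s) ≠ 0)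
    (h2 : ∀ v, d v = 0 → d (v + s) = 1 → d (v + s + s) ≠ 0)
    (h3 : ∀ v, d v = 0 → d (v + s) = 1 → d (v + s + s) = 1 → d (v + s + s + s) ≠ 0) :
    ∑ v, (if d v = 0 then 3 else 0) ≤ ∑ u, charge (d u) := by
  refine le_trans (sum_le_sum fun v _ => ?_) (sum_collected_le_sum_charge d s)
  split_ifs with hv
  exacts [three_le_collected h1 h2 h3 hv, le_rfl]

end Discharging

section Products

variable {ι : Type*} [Fintype ι] (d : ι → ℕ)

theorem two_pow_le_two_pow_mul_catalan (k : ℕ) :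
    2 ^ k ≤ 2 ^ (if k = 0 then 0 else 1) * catalan k := by
  split_ifs with hk
  · simp [hk, catalan_zero]
  · simpa using two_pow_le_two_mul_catalan (Nat.one_le_iff_ne_zero.2 hk)

theorem catalan_sq_mul_two_pow_le (k : ℕ) :
    catalan k ^ 2 * 2 ^ (3 + charge k) ≤ 2 ^ (4 * k + if k = 0 then 3 else 0) := by
  rcases Nat.lt_or_ge k 2 with hk | hk
  · interval_cases k <;> simp [charge, catalan_zero, catalan_one]
  · have := Nat.pow_le_pow_left (eight_mul_catalan_le_four_pow hk) 2
    rw [charge, if_neg (by omega), if_neg (by omega), if_neg (by omega)]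
    calc catalan k ^ 2 * 2 ^ 6 = (8 * catalan k) ^ 2 := by ring
      _ ≤ (4 ^ k) ^ 2 := this
      _ = 2 ^ (4 * k + 0) := by rw [← pow_mul, show (4 : ℕ) = 2 ^ 2 by rfl, ← pow_mul]; ring_nf

theorem two_pow_sum_le_prod_catalan :
    2 ^ (∑ i, d i) ≤ 2 ^ #{i | d i ≠ 0} * ∏ i, catalan (d i) := by
  have : #{i | d i ≠ 0} = ∑ i, if d i = 0 then 0 else 1 := by
    rw [card_filter]; exact sum_congr rfl fun i _ => by split_ifs <;> simp_all
  rw [this, ← prod_pow_eq_pow_sum, ← prod_pow_eq_pow_sum, ← prod_mul_distrib]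
  exact prod_le_prod' fun i _ => two_pow_le_two_pow_mul_catalan (d i)

theorem prod_catalan_sq_mul_two_pow_le :
    (∏ i, catalan (d i)) ^ 2 * 2 ^ (3 * Fintype.card ι + ∑ i, charge (d i)) ≤
      2 ^ (4 * ∑ i, d i + ∑ i, if d i = 0 then 3 else 0) := by
  have h := prod_le_prod' fun i (_ : i ∈ univ) => catalan_sq_mul_two_pow_le (d i)
  rw [prod_mul_distrib, prod_pow, prod_pow_eq_pow_sum, prod_pow_eq_pow_sum] at h
  rwa [sum_add_distrib, sum_add_distrib, sum_const, card_univ, smul_eq_mul, ← mul_sum,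
    mul_comm (Fintype.card ι)] at h

end Products

theorem crosses_iff {m : ℕ} {p q : Fin m × Fin m} (hp : p.1 < p.2) (hq : q.1 < q.2) :
    Crosses m p q ↔ (p.1 < q.1 ∧ q.1 < p.2 ∧ p.2 < q.2) ∨ (q.1 < p.1 ∧ p.1 < q.2 ∧ q.2 < p.2) := by
  unfold Crosses Xor'
  simp only [Fin.lt_def, Xor] at *
  omega

theorem IsDiagonal.lt {m : ℕ} {p : Fin m × Fin m} (hp : IsDiagonal m p) : p.1 < p.2 :=
  Fin.lt_def.2 (by have := hp.1; omega)

section Triangulation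

variable {m : ℕ} {T : Finset (Fin m × Fin m)} {a b : ℕ}

/-- Diagonals addressed by the natural-number labels of their endpoints, for `omega`. -/
def Joins (T : Finset (Fin m × Fin m)) (x y : ℕ) : Prop :=
  ∃ p ∈ T, (p.1 : ℕ) = x ∧ (p.2 : ℕ) = y

def IsEdge (T : Finset (Fin m × Fin m)) (a b : ℕ) : Prop :=
  b = a + 1 ∨ Joins T a b

def Uncrossed (T : Finset (Fin m × Fin m)) (a b : ℕ) : Prop :=
  ∀ x y, Joins T x y → (a < x ∧ x < b ∨ a < y ∧ y < b) → a ≤ x ∧ y ≤ b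

def diagsWithin (T : Finset (Fin m × Fin m)) (a b : ℕ) : Finset (Fin m × Fin m) :=
  T.filter fun p => a ≤ (p.1 : ℕ) ∧ (p.2 : ℕ) ≤ b

theorem degT_eq_zero_iff {i : Fin m} :
    degT T i = 0 ↔ ∀ x y, Joins T x y → x ≠ i ∧ y ≠ i := by
  simp only [degT, card_eq_zero, filter_eq_empty_iff, Joins]
  constructor
  · rintro h x y ⟨p, hp, rfl, rfl⟩
    have := h hp
    exact ⟨fun e => this (.inl (Fin.ext e)), fun e => this (.inr (Fin.ext e))⟩
  · rintro h p hp (e | e) <;> subst e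
    exacts [(h _ _ ⟨p, hp, rfl, rfl⟩).1 rfl, (h _ _ ⟨p, hp, rfl, rfl⟩).2 rfl]

theorem two_le_degT {i : Fin m} {x y x' y' : ℕ} (h : Joins T x y) (h' : Joins T x' y')
    (hne : (x, y) ≠ (x', y')) (hi : x = i ∨ y = i) (hi' : x' = i ∨ y' = i) : 2 ≤ degT T i := by
  obtain ⟨p, hp, rfl, rfl⟩ := h
  obtain ⟨q, hq, rfl, rfl⟩ := h'
  have mem : ∀ r ∈ T, ((r.1 : ℕ) = i ∨ (r.2 : ℕ) = i) →
      r ∈ T.filter fun p => p.1 = i ∨ p.2 = i := fun r hr hri =>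
    mem_filter.2 ⟨hr, hri.imp Fin.ext Fin.ext⟩
  exact one_lt_card.2 ⟨p, mem p hp hi, q, mem q hq hi', fun e => hne (by rw [e])⟩

theorem uncrossed_zero_sub_one : Uncrossed T 0 (m - 1) := by
  rintro x y ⟨p, -, rfl, rfl⟩ -
  exact ⟨Nat.zero_le _, by have := p.2.isLt; omega⟩

namespace IsTriangulation

theorem bounds_of_joins (hT : IsTriangulation m T) {x y : ℕ} (h : Joins T x y) :
    x + 1 < y ∧ y < m ∧ ¬(x = 0 ∧ y + 1 = m) := by
  obtain ⟨p, hp, rfl, rfl⟩ := h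
  exact ⟨(hT.1 p hp).1, p.2.isLt, (hT.1 p hp).2⟩

theorem not_interleave (hT : IsTriangulation m T) {x y x' y' : ℕ} (h : Joins T x y)
    (h' : Joins T x' y') : ¬(x < x' ∧ x' < y ∧ y < y') := by
  obtain ⟨p, hp, rfl, rfl⟩ := h
  obtain ⟨q, hq, rfl, rfl⟩ := h'
  intro hpq
  refine hT.2.1 p hp q hq ((crosses_iff (hT.1 p hp).lt (hT.1 q hq).lt).2 (.inl ?_))
  simpa only [Fin.lt_def] using hpq

theorem exists_crossing (hT : IsTriangulation m T) {x y : ℕ} (hxy : x + 1 < y) (hy : y < m)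
    (hw : ¬(x = 0 ∧ y + 1 = m)) (h : ¬Joins T x y) :
    ∃ c d, Joins T c d ∧ (c < x ∧ x < d ∧ d < y ∨ x < c ∧ c < y ∧ y < d) := by
  let q : Fin m × Fin m := (⟨x, by omega⟩, ⟨y, hy⟩)
  have hq : IsDiagonal m q := ⟨hxy, hw⟩
  obtain ⟨p, hp, hc⟩ := hT.2.2 q hq fun hqT => h ⟨q, hqT, rfl, rfl⟩
  rw [crosses_iff (hT.1 p hp).lt hq.lt] at hc
  exact ⟨p.1, p.2, ⟨p, hp, rfl, rfl⟩, by simpa only [Fin.lt_def] using hc⟩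

theorem uncrossed (hT : IsTriangulation m T) (h : IsEdge T a b) : Uncrossed T a b := by
  intro x y hxy hmid
  have := hT.bounds_of_joins hxy
  rcases h with rfl | h
  · omega
  constructor
  · by_contra
    exact hT.not_interleave hxy h (by omega)
  · by_contra
    exact hT.not_interleave h hxy (by omega)

/-- The apex is the largest `d < b` joined to `a`: then `a, d, b` is the triangle of `T` on the
chord `(a, b)`. -/
theorem exists_apex (hT : IsTriangulation m T) (hab : a + 2 ≤ b) (hb : b < m)
    (hu : Uncrossed T a b) : ∃ d, a < d ∧ d < b ∧ IsEdge T a d ∧ IsEdge T d b := by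
  classical
  let d := Nat.findGreatest (IsEdge T a) (b - 1)
  have hd : IsEdge T a d := Nat.findGreatest_spec (P := IsEdge T a) (by omega) (.inl rfl)
  have had : a + 1 ≤ d := Nat.le_findGreatest (P := IsEdge T a) (by omega) (.inl rfl)
  have hdb : d ≤ b - 1 := Nat.findGreatest_le _
  have hmax : ∀ z, z ≤ b - 1 → IsEdge T a z → z ≤ d := fun z hz hza =>
    Nat.le_findGreatest hz hza
  refine ⟨d, by omega, by omega, hd, ?_⟩
  by_contra hdb'
  obtain ⟨x, y, hxy, hc⟩ := hT.exists_crossing (x := d) (y := b) (by simp_all [IsEdge]; omega)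
    hb (by omega) fun h => hdb' (.inr h)
  have := hT.bounds_of_joins hxy
  rcases hc with ⟨h1, h2, h3⟩ | ⟨h1, h2, h3⟩
  · obtain ⟨hax, -⟩ := hu x y hxy (.inr ⟨by omega, h3⟩)
    rcases Nat.lt_or_eq_of_le hax with hax | rfl
    · rcases hd with hd | hd
      · omega
      · exact hT.not_interleave hd hxy ⟨hax, h1, h2⟩
    · have := hmax y (by omega) (.inr hxy)
      omega
  · have := hu x y hxy (.inl ⟨by omega, h2⟩)
    omega

theorem mem_diagsWithin_split (hT : IsTriangulation m T) {d : ℕ} (h1 : IsEdge T a d)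
    (h2 : IsEdge T d b) {p : Fin m × Fin m} (hp : p ∈ diagsWithin T a b)
    (hne : ¬((p.1 : ℕ) = a ∧ (p.2 : ℕ) = b)) : p ∈ diagsWithin T a d ∪ diagsWithin T d b := by
  simp only [diagsWithin, mem_union, mem_filter] at hp ⊢
  obtain ⟨hpT, hap, hpb⟩ := hp
  have hj : Joins T p.1 p.2 := ⟨p, hpT, rfl, rfl⟩
  by_cases hpd : (p.2 : ℕ) ≤ d
  · exact .inl ⟨hpT, hap, hpd⟩
  by_cases hdp : d ≤ (p.1 : ℕ)
  · exact .inr ⟨hpT, hdp, hpb⟩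
  exfalso
  rcases Nat.lt_or_eq_of_le hap with hap | hap
  · rcases h1 with h1 | h1
    · omega
    · exact hT.not_interleave h1 hj ⟨hap, by omega, by omega⟩
  · rcases h2 with h2 | h2
    · omega
    · exact hT.not_interleave hj h2 ⟨by omega, by omega, by omega⟩

theorem disjoint_diagsWithin (hT : IsTriangulation m T) (d : ℕ) :
    Disjoint (diagsWithin T a d) (diagsWithin T d b) := by
  refine disjoint_left.2 fun p hp hp' => ?_
  simp only [diagsWithin, mem_filter] at hp hp'
  have := (hT.1 p hp.1).1
  omega

open Classical in
theorem card_diagsWithin_eq_add (hT : IsTriangulation m T) {d : ℕ} (had : a < d) (hdb : d < b)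
    (h1 : IsEdge T a d) (h2 : IsEdge T d b) :
    #(diagsWithin T a b) =
      #(diagsWithin T a d) + #(diagsWithin T d b) + if Joins T a b then 1 else 0 := by
  let ends : Fin m × Fin m → Prop := fun p => (p.1 : ℕ) = a ∧ (p.2 : ℕ) = b
  have hrest : (diagsWithin T a b).filter (¬ends ·) = diagsWithin T a d ∪ diagsWithin T d b := by
    ext p
    constructor
    · intro hp
      rw [mem_filter] at hp
      exact mem_diagsWithin_split hT h1 h2 hp.1 hp.2
    · simp only [diagsWithin, mem_union, mem_filter, ends]
      rintro (⟨hp, h1, h2⟩ | ⟨hp, h1, h2⟩) <;> exact ⟨⟨hp, by omega, by omega⟩, by omega⟩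
  have hends : #((diagsWithin T a b).filter ends) = if Joins T a b then 1 else 0 := by
    split_ifs with hab
    · obtain ⟨p, hp, rfl, rfl⟩ := hab
      refine card_eq_one.2 ⟨p, eq_singleton_iff_unique_mem.2 ⟨?_, fun q hq => ?_⟩⟩
      · simp [diagsWithin, hp, ends]
      · simp only [diagsWithin, mem_filter, ends] at hq
        exact Prod.ext (Fin.ext hq.2.1) (Fin.ext hq.2.2)
    · refine card_eq_zero.2 (filter_eq_empty_iff.2 fun p hp hpe => hab ⟨p, ?_, hpe⟩)
      exact (mem_filter.1 hp).1
  rw [← card_filter_add_card_filter_not ends, hrest, hends,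
    card_union_of_disjoint (disjoint_diagsWithin hT d)]
  ring

theorem card_diagsWithin (hT : IsTriangulation m T) (hab : a < b) (hb : b < m)
    (h : IsEdge T a b) : #(diagsWithin T a b) = b - a - 1 := by
  induction hn : b - a using Nat.strong_induction_on generalizing a b with
  | _ n ih =>
  rcases h with rfl | hj
  · suffices diagsWithin T a (a + 1) = ∅ by rw [this, card_empty]; omega
    refine filter_eq_empty_iff.2 fun p hp hab => ?_
    have := (hT.1 p hp).1
    omega
  · have := hT.bounds_of_joins hj
    obtain ⟨d, had, hdb, h1, h2⟩ := hT.exists_apex (by omega) hb (hT.uncrossed (.inr hj))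
    rw [hT.card_diagsWithin_eq_add had hdb h1 h2, if_pos hj,
      ih (d - a) (by omega) had (by omega) h1 rfl, ih (b - d) (by omega) hdb hb h2 rfl]
    omega

theorem card_eq (hT : IsTriangulation m T) (hm : 3 ≤ m) : #T = m - 3 := by
  have hall : diagsWithin T 0 (m - 1) = T :=
    filter_true_of_mem fun p _ => ⟨Nat.zero_le _, by have := p.2.isLt; omega⟩
  obtain ⟨d, h0d, hdm, h1, h2⟩ := hT.exists_apex (a := 0) (b := m - 1) (by omega) (by omega)
    uncrossed_zero_sub_one
  have hno : ¬Joins T 0 (m - 1) := fun h => (hT.bounds_of_joins h).2.2 ⟨rfl, by omega⟩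
  rw [← hall, hT.card_diagsWithin_eq_add h0d hdm h1 h2, if_neg hno,
    hT.card_diagsWithin h0d (by omega) h1, hT.card_diagsWithin hdm (by omega) h2]
  omega

theorem sum_degT (hT : IsTriangulation m T) : ∑ i, degT T i = 2 * #T := by
  classical
  simp only [degT, card_filter]
  rw [sum_comm, mul_comm, ← smul_eq_mul, ← sum_const]
  refine sum_congr rfl fun p hp => ?_
  have hne : p.1 ≠ p.2 := (hT.1 p hp).lt.ne
  have hends : (univ : Finset (Fin m)).filter (fun i => p.1 = i ∨ p.2 = i) = {p.1, p.2} := by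
    ext
    simp [eq_comm]
  rw [← card_filter, hends, card_pair hne]

theorem exists_degT_eq_zero_between (hT : IsTriangulation m T) (h : Joins T a b) :
    ∃ v : Fin m, a < v ∧ (v : ℕ) < b ∧ degT T v = 0 := by
  induction hn : b - a using Nat.strong_induction_on generalizing a b with
  | _ n ih =>
  have hab := hT.bounds_of_joins h
  obtain ⟨d, had, hdb, h1, h2⟩ := hT.exists_apex (by omega) hab.2.1 (hT.uncrossed (.inr h))
  rcases h1 with rfl | h1
  · rcases h2 with rfl | h2
    · refine ⟨⟨a + 1, by omega⟩, by simp, by simp, degT_eq_zero_iff.2 fun x y hxy => ?_⟩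
      have := hT.bounds_of_joins hxy
      have := hT.uncrossed (.inr h) x y hxy
      simp only [ne_eq]
      omega
    · obtain ⟨v, hv⟩ := ih (b - (a + 1)) (by omega) h2 rfl
      exact ⟨v, by omega, hv.2⟩
  · obtain ⟨v, hv⟩ := ih (d - a) (by omega) h1 rfl
    exact ⟨v, hv.1, by omega, hv.2.2⟩

theorem degT_eq_zero_of_joins_one_sub_one (hT : IsTriangulation m T) (h : Joins T 1 (m - 1))
    {v : Fin m} (hv : (v : ℕ) = 0) : degT T v = 0 :=
  degT_eq_zero_iff.2 fun x y hxy => by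
    have := hT.bounds_of_joins hxy
    have := hT.uncrossed (.inr h) x y hxy
    omega

theorem degT_eq_zero_of_joins_zero_sub_two (hT : IsTriangulation m T) (h : Joins T 0 (m - 2))
    {v : Fin m} (hv : (v : ℕ) = m - 1) : degT T v = 0 :=
  degT_eq_zero_iff.2 fun x y hxy => by
    have := hT.bounds_of_joins hxy
    have := hT.uncrossed (.inr h) x y hxy
    omega

theorem exists_two_ears (hT : IsTriangulation m T) (hm : 4 ≤ m) :
    ∃ v w : Fin m, v ≠ w ∧ degT T v = 0 ∧ degT T w = 0 := by
  obtain ⟨d, h0d, hdm, h1, h2⟩ := hT.exists_apex (a := 0) (b := m - 1) (by omega) (by omega)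
    uncrossed_zero_sub_one
  rcases h1 with rfl | h1
  · rcases h2 with h2 | h2
    · omega
    obtain ⟨v, hv⟩ := hT.exists_degT_eq_zero_between h2
    exact ⟨v, ⟨0, by omega⟩, fun e => by simp [e] at hv,
      hv.2.2, hT.degT_eq_zero_of_joins_one_sub_one h2 rfl⟩
  obtain ⟨v, hv⟩ := hT.exists_degT_eq_zero_between h1
  rcases h2 with h2 | h2
  · obtain rfl : d = m - 2 := by omega
    exact ⟨v, ⟨m - 1, by omega⟩, fun e => by simp [e] at hv; omega,
      hv.2.2, hT.degT_eq_zero_of_joins_zero_sub_two h1 rfl⟩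
  · obtain ⟨w, hw⟩ := hT.exists_degT_eq_zero_between h2
    exact ⟨v, w, fun e => by subst e; omega, hv.2.2, hw.2.2⟩

theorem joins_of_degT_eq_zero (hT : IsTriangulation m T) (hm : 4 ≤ m) {v : Fin m}
    (h0 : degT T v = 0) (h1 : 1 ≤ (v : ℕ)) (h2 : (v : ℕ) + 2 ≤ m) :
    Joins T (v - 1) (v + 1) := by
  by_contra hj
  obtain ⟨x, y, hxy, hc⟩ := hT.exists_crossing (by omega) (by omega) (by omega) hj
  have := degT_eq_zero_iff.1 h0 x y hxy
  omega

theorem ear_pattern_at_one (hT : IsTriangulation m T) (hm : 6 ≤ m)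
    {v₁ v₂ v₃ v₄ : Fin m} (h₁ : (v₁ : ℕ) = 1) (h₂ : (v₂ : ℕ) = 2) (h₃ : (v₃ : ℕ) = 3)
    (h₄ : (v₄ : ℕ) = 4) (h0 : degT T v₁ = 0) :
    degT T v₂ ≠ 0 ∧ (degT T v₂ = 1 → degT T v₃ ≠ 0) ∧
      (degT T v₂ = 1 → degT T v₃ = 1 → degT T v₄ ≠ 0) := by
  have e₁ : Joins T 0 2 := by
    simpa [h₁] using hT.joins_of_degT_eq_zero (by omega) h0 (by omega) (by omega)
  refine ⟨fun h0' => ?_, fun hd₂ h0' => ?_, fun hd₂ hd₃ h0' => ?_⟩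
  · have e₂ : Joins T 1 3 := by
      simpa [h₂] using hT.joins_of_degT_eq_zero (by omega) h0' (by omega) (by omega)
    exact hT.not_interleave e₁ e₂ (by omega)
  · have e₃ : Joins T 2 4 := by
      simpa [h₃] using hT.joins_of_degT_eq_zero (by omega) h0' (by omega) (by omega)
    have := two_le_degT e₁ e₃ (by simp) (.inr h₂.symm) (.inl h₂.symm)
    omega
  · have e₄ : Joins T 3 5 := by
      simpa [h₄] using hT.joins_of_degT_eq_zero (by omega) h0' (by omega) (by omega)
    by_cases e₀₃ : Joins T 0 3
    · have := two_le_degT e₀₃ e₄ (by simp) (.inr h₃.symm) (.inl h₃.symm)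
      omega
    obtain ⟨x, y, hxy, hc⟩ := hT.exists_crossing (by omega) (by omega) (by omega) e₀₃
    have := degT_eq_zero_iff.1 h0 x y hxy
    obtain rfl : x = 2 := by omega
    have := two_le_degT e₁ hxy (by simp) (.inr h₂.symm) (.inl h₂.symm)
    omega

theorem card_degT_ne_zero_le (hT : IsTriangulation m T) (hm : 4 ≤ m) :
    #{i | degT T i ≠ 0} ≤ m - 2 := by
  obtain ⟨v, w, hvw, hv, hw⟩ := hT.exists_two_ears hm
  calc #{i | degT T i ≠ 0} ≤ #({v, w}ᶜ : Finset (Fin m)) :=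
        card_le_card fun i hi => by
          simp only [mem_filter, mem_compl, mem_insert, mem_singleton] at hi ⊢
          rintro (rfl | rfl) <;> simp_all
    _ = m - 2 := by rw [card_compl, card_pair hvw, Fintype.card_fin]

end IsTriangulation

end Triangulation

/-- `omega` cannot reduce `(a + k) % m` for a variable `m`; this is the form it can use. -/
theorem Fin.val_add_cases {m : ℕ} (a k : Fin m) :
    ((a + k : Fin m) : ℕ) = a + k ∧ (a : ℕ) + k < m ∨ ((a + k : Fin m) : ℕ) + m = a + k := by
  rw [Fin.val_add_eq_ite]
  split_ifs <;> omega

section Rotation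

variable {m : ℕ} {T : Finset (Fin m × Fin m)}

def rotatePair (k : Fin m) (p : Fin m × Fin m) : Fin m × Fin m :=
  if p.1 + k < p.2 + k then (p.1 + k, p.2 + k) else (p.2 + k, p.1 + k)

theorem rotatePair_cases (k : Fin m) (p : Fin m × Fin m) :
    rotatePair k p = (p.1 + k, p.2 + k) ∧ p.1 + k < p.2 + k ∨
      rotatePair k p = (p.2 + k, p.1 + k) ∧ ¬p.1 + k < p.2 + k := by
  unfold rotatePair
  split_ifs with h
  exacts [.inl ⟨rfl, h⟩, .inr ⟨rfl, h⟩]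

theorem rotatePair_neg_rotatePair [NeZero m] {p : Fin m × Fin m} (hp : p.1 < p.2) (k : Fin m) :
    rotatePair (-k) (rotatePair k p) = p := by
  unfold rotatePair
  split_ifs <;> simp_all [lt_asymm hp]

theorem IsDiagonal.rotatePair {p : Fin m × Fin m} (hp : IsDiagonal m p) (k : Fin m) :
    IsDiagonal m (rotatePair k p) := by
  obtain ⟨h1, h2⟩ := hp
  have := p.1.val_add_cases k
  have := p.2.val_add_cases k
  have := p.2.isLt
  have := k.isLt
  rcases rotatePair_cases k p with ⟨e, c⟩ | ⟨e, c⟩ <;>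
    rw [e] <;> simp only [IsDiagonal, Fin.lt_def] at c ⊢ <;> omega

theorem Crosses.rotatePair {p q : Fin m × Fin m} (hp : IsDiagonal m p) (hq : IsDiagonal m q)
    (h : Crosses m p q) (k : Fin m) : Crosses m (rotatePair k p) (rotatePair k q) := by
  rw [crosses_iff hp.lt hq.lt] at h
  rw [crosses_iff (hp.rotatePair k).lt (hq.rotatePair k).lt]
  have := p.1.val_add_cases k
  have := p.2.val_add_cases k
  have := q.1.val_add_cases k
  have := q.2.val_add_cases k
  have := p.2.isLt
  have := q.2.isLt
  have := hp.1
  have := hq.1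
  rcases rotatePair_cases k p with ⟨e1, c1⟩ | ⟨e1, c1⟩ <;>
    rcases rotatePair_cases k q with ⟨e2, c2⟩ | ⟨e2, c2⟩ <;>
    rw [e1, e2] <;> simp only [Fin.lt_def] at c1 c2 h ⊢ <;>
    -- keep `omega` from unfolding the rotated labels into `% m`
    generalize ((p.1 + k : Fin m) : ℕ) = a at * <;>
    generalize ((p.2 + k : Fin m) : ℕ) = b at * <;>
    generalize ((q.1 + k : Fin m) : ℕ) = c at * <;>
    generalize ((q.2 + k : Fin m) : ℕ) = d at * <;> omega

theorem IsTriangulation.image_rotatePair [NeZero m] (hT : IsTriangulation m T) (k : Fin m) :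
    IsTriangulation m (T.image (rotatePair k)) := by
  have back : ∀ {q : Fin m × Fin m}, q.1 < q.2 → rotatePair k (rotatePair (-k) q) = q :=
    fun hq => by simpa using rotatePair_neg_rotatePair hq (-k)
  refine ⟨?_, ?_, ?_⟩
  · simp only [mem_image]
    rintro _ ⟨p, hp, rfl⟩
    exact (hT.1 p hp).rotatePair k
  · simp only [mem_image]
    rintro _ ⟨p, hp, rfl⟩ _ ⟨q, hq, rfl⟩ hc
    have := hc.rotatePair ((hT.1 p hp).rotatePair k) ((hT.1 q hq).rotatePair k) (-k)
    rw [rotatePair_neg_rotatePair (hT.1 p hp).lt, rotatePair_neg_rotatePair (hT.1 q hq).lt] at this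
    exact hT.2.1 p hp q hq this
  · intro q hq hqT
    have hq' := hq.rotatePair (-k)
    obtain ⟨p, hp, hc⟩ :=
      hT.2.2 _ hq' fun h => hqT (back hq.lt ▸ mem_image_of_mem _ h)
    exact ⟨_, mem_image_of_mem _ hp, back hq.lt ▸ hc.rotatePair (hT.1 p hp) hq' k⟩

theorem IsTriangulation.degT_image_rotatePair [NeZero m] (hT : IsTriangulation m T)
    (k i : Fin m) :
    degT (T.image (rotatePair k)) (i + k) = degT T i := by
  classical
  have hinj : Set.InjOn (rotatePair k) T := fun p hp q hq h => by
    rw [← rotatePair_neg_rotatePair (hT.1 p hp).lt k, h, rotatePair_neg_rotatePair (hT.1 q hq).lt]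
  unfold degT
  rw [filter_image, card_image_of_injOn (hinj.mono (filter_subset _ _))]
  congr 1
  refine filter_congr fun p _ => ?_
  rcases rotatePair_cases k p with ⟨e, -⟩ | ⟨e, -⟩ <;> simp [e, or_comm]

end Rotation

section Charge

variable {m : ℕ} {T : Finset (Fin m × Fin m)}

/-- Rotating `v` to vertex `1` keeps the four vertices involved away from the wrap-around at `0`. -/
theorem IsTriangulation.ear_pattern (hT : IsTriangulation m T) (hm : 6 ≤ m) {s : Fin m}
    (hs : (s : ℕ) = 1) {v : Fin m} (h0 : degT T v = 0) :
    degT T (v + s) ≠ 0 ∧ (degT T (v + s) = 1 → degT T (v + s + s) ≠ 0) ∧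
      (degT T (v + s) = 1 → degT T (v + s + s) = 1 → degT T (v + s + s + s) ≠ 0) := by
  have : NeZero m := ⟨by omega⟩
  let w : Fin m := ⟨1, by omega⟩
  have hdeg (u : Fin m) : degT T u = degT (T.image (rotatePair (w - v))) (u + (w - v)) :=
    (hT.degT_image_rotatePair _ u).symm
  have hval (u : Fin m) (hu : (u : ℕ) + 1 < m) : ((u + s : Fin m) : ℕ) = u + 1 := by
    rw [Fin.val_add_eq_of_add_lt (by omega), hs]
  rw [hdeg v, show v + (w - v) = w by abel] at h0
  rw [hdeg, hdeg, hdeg, show v + s + (w - v) = w + s by abel,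
    show v + s + s + (w - v) = w + s + s by abel,
    show v + s + s + s + (w - v) = w + s + s + s by abel]
  have h₂ : ((w + s : Fin m) : ℕ) = 2 := hval w (show 1 + 1 < m by omega)
  have h₃ : ((w + s + s : Fin m) : ℕ) = 3 := by rw [hval _ (by rw [h₂]; omega), h₂]
  have h₄ : ((w + s + s + s : Fin m) : ℕ) = 4 := by rw [hval _ (by rw [h₃]; omega), h₃]
  exact (hT.image_rotatePair _).ear_pattern_at_one hm rfl h₂ h₃ h₄ h0

theorem IsTriangulation.sum_ite_degT_le_sum_charge (hT : IsTriangulation m T) (hm : 6 ≤ m) :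
    ∑ v, (if degT T v = 0 then 3 else 0) ≤ ∑ u, charge (degT T u) := by
  have : NeZero m := ⟨by omega⟩
  have hs : ((⟨1, by omega⟩ : Fin m) : ℕ) = 1 := rfl
  exact sum_ite_three_le_sum_charge (s := ⟨1, by omega⟩)
    (fun _ hv => (hT.ear_pattern hm hs hv).1) (fun _ hv => (hT.ear_pattern hm hs hv).2.1)
    (fun _ hv => (hT.ear_pattern hm hs hv).2.2)

end Charge

theorem catalan_product_bounds {n : ℕ} (hn : 4 ≤ n)
    (T : Finset (Fin (n + 2) × Fin (n + 2))) (hT : IsTriangulation (n + 2) T) :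
    2 ^ (n - 2) ≤ ∏ i : Fin (n + 2), catalan (degT T i) ∧
    (∏ i : Fin (n + 2), catalan (degT T i)) ^ 2 ≤ 2 ^ (5 * n - 14) := by
  set P := ∏ i : Fin (n + 2), catalan (degT T i)
  have hsum : ∑ i, degT T i = 2 * n - 2 := by
    rw [hT.sum_degT, hT.card_eq (by omega)]
    omega
  constructor
  · have h := two_pow_sum_le_prod_catalan (degT T)
    have hnz := hT.card_degT_ne_zero_le (by omega)
    rw [hsum] at h
    refine Nat.le_of_mul_le_mul_left (?_ : 2 ^ n * _ ≤ 2 ^ n * _) (by positivity)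
    calc 2 ^ n * 2 ^ (n - 2) = 2 ^ (2 * n - 2) := by rw [← pow_add]; congr 1; omega
      _ ≤ 2 ^ #{i | degT T i ≠ 0} * P := h
      _ ≤ 2 ^ n * P := by gcongr <;> omega
  · have h := prod_catalan_sq_mul_two_pow_le (degT T)
    have hch := hT.sum_ite_degT_le_sum_charge (by omega)
    rw [hsum, Fintype.card_fin] at h
    have hP : P ^ 2 * 2 ^ (3 * (n + 2) + ∑ i, charge (degT T i)) ≤
        2 ^ (5 * n - 14) * 2 ^ (3 * (n + 2) + ∑ i, charge (degT T i)) :=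
      calc _ ≤ 2 ^ (4 * (2 * n - 2) + ∑ i, if degT T i = 0 then 3 else 0) := h
        _ ≤ 2 ^ (4 * (2 * n - 2) + ∑ i, charge (degT T i)) := by gcongr; norm_num
        _ = _ := by rw [← pow_add]; congr 1; omega
    exact Nat.le_of_mul_le_mul_right hP (by positivity)
end

section
/- Let m ≥ 6 and let T be a triangulation of a convex m-gon. Let e be the number of vertices i with deg_T(i) = 0 (the ears of T) and let l be the number of vertices i with deg_T(i) = 1. Then 6·e + 2·l ≤ 3·m (equivalently, 3e + l ≤ 3m/2). -/
/-!
Give each vertex of positive degree the weight `1` if its degree is `1` and `3` otherwise. The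
non-ears then carry total weight `3(m - e) - 2l`, so it suffices that this is at least `3e`.

An ear `e` forces the diagonal `{e-1, e+1}`. Hence two ears are never adjacent; two ears at
distance `2` give the vertex between them two diagonals; and for ears `e`, `e+3` the vertices
`e+1`, `e+2` cannot both have degree `1` (when `m ≥ 6`): otherwise `{e-1, e+2}` is not in `T`, yet
every diagonal crossing it would have to end at `e` or `e+1`, and neither has such a diagonal.
So each ear can claim the vertices following it, up to and including the first one of degree
`≥ 2` but at most three of them: these are never ears, their weight is at least `3`, and the claims
of distinct ears are disjoint since neither ear can lie in the other's claim.
-/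

namespace Polygon

variable {m : ℕ}

def offset (a : Fin m) (j : ℕ) : Fin m := ⟨(a + j) % m, Nat.mod_lt _ a.pos⟩

theorem val_offset (a : Fin m) {j : ℕ} (hj : j ≤ m) :
    ((offset a j : ℕ) = a + j ∧ (a : ℕ) + j < m) ∨
      ((offset a j : ℕ) + m = a + j ∧ m ≤ (a : ℕ) + j) := by
  have ha := a.isLt
  rcases lt_or_ge ((a : ℕ) + j) m with h | h
  · exact Or.inl ⟨Nat.mod_eq_of_lt h, h⟩
  · have hmod : ((a : ℕ) + j) % m = a + j - m := by
      rw [Nat.mod_eq_sub_mod h, Nat.mod_eq_of_lt (by omega)]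
    exact Or.inr ⟨by simp only [offset]; omega, h⟩

theorem offset_offset (a : Fin m) (i j : ℕ) : offset (offset a i) j = offset a (i + j) :=
  Fin.ext <| by simp only [offset, Nat.mod_add_mod, add_assoc]

theorem offset_zero (a : Fin m) : offset a 0 = a :=
  Fin.ext <| by simp [offset, Nat.mod_eq_of_lt a.isLt]

theorem offset_self (a : Fin m) : offset a m = a :=
  Fin.ext <| by simp [offset, Nat.mod_eq_of_lt a.isLt]

theorem offset_inj (a : Fin m) {i j : ℕ} (hi : i < m) (hj : j < m) :
    offset a i = offset a j ↔ i = j := by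
  refine ⟨fun h => ?_, fun h => h ▸ rfl⟩
  have hval := congrArg Fin.val h
  rcases val_offset a hi.le with ⟨hi1, hi2⟩ | ⟨hi1, hi2⟩ <;>
    rcases val_offset a hj.le with ⟨hj1, hj2⟩ | ⟨hj1, hj2⟩ <;> omega

theorem offset_ne_self (a : Fin m) {j : ℕ} (h0 : 0 < j) (hj : j < m) : offset a j ≠ a := by
  intro h
  have := (offset_inj a hj a.pos).1 (h.trans (offset_zero a).symm)
  omega

theorem offset_left_cancel {a b : Fin m} {j : ℕ} (h : offset a j = offset b j) : a = b := by
  have hmod : (a : ℕ) ≡ b [MOD m] := Nat.ModEq.add_right_cancel' j (congrArg Fin.val h)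
  exact Fin.ext <| by rwa [Nat.ModEq, Nat.mod_eq_of_lt a.isLt, Nat.mod_eq_of_lt b.isLt] at hmod

theorem exists_offset_one_eq (a : Fin m) : ∃ b, offset b 1 = a :=
  ⟨offset a (m - 1), by rw [offset_offset, Nat.sub_add_cancel a.pos, offset_self]⟩

theorem exists_offset_eq (a v : Fin m) : ∃ j < m, offset a j = v := by
  have ha := a.isLt
  have hv := v.isLt
  by_cases hav : (a : ℕ) ≤ v
  · refine ⟨v - a, by omega, Fin.ext ?_⟩
    rcases val_offset a (j := v - a) (by omega) with ⟨h1, h2⟩ | ⟨h1, h2⟩ <;> omega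
  · refine ⟨v + m - a, by omega, Fin.ext ?_⟩
    rcases val_offset a (j := v + m - a) (by omega) with ⟨h1, h2⟩ | ⟨h1, h2⟩ <;> omega

def Joins (p : Fin m × Fin m) (x y : Fin m) : Prop :=
  (p.1 = x ∧ p.2 = y) ∨ (p.1 = y ∧ p.2 = x)

namespace Joins

variable {p : Fin m × Fin m} {x y : Fin m}

theorem symm (h : Joins p x y) : Joins p y x := Or.symm h

theorem incident_left (h : Joins p x y) : p.1 = x ∨ p.2 = x := by
  rcases h with ⟨h1, -⟩ | ⟨-, h2⟩
  exacts [Or.inl h1, Or.inr h2]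

theorem incident_right (h : Joins p x y) : p.1 = y ∨ p.2 = y :=
  h.symm.incident_left

theorem eq_or_eq {x' y' : Fin m} (h : Joins p x y) (h' : Joins p x' y') :
    (x = x' ∧ y = y') ∨ (x = y' ∧ y = x') := by
  rcases h with ⟨rfl, rfl⟩ | ⟨rfl, rfl⟩ <;> rcases h' with ⟨h1, h2⟩ | ⟨h1, h2⟩ <;> simp_all

end Joins

theorem crosses_comm {p q : Fin m × Fin m} : Crosses m p q ↔ Crosses m q p :=
  and_comm

/-- Crossing read in cyclic coordinates based at an endpoint `a` of `q`: the one place where the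
wrap-around of the labels modulo `m` has to be dealt with. -/
theorem crosses_iff_of_joins {p q : Fin m × Fin m} {a : Fin m} {k j j' : ℕ}
    (hq : q.1 < q.2) (hp : p.1 < p.2) (hk : k < m) (hj : j < m) (hj' : j' < m)
    (hqa : Joins q a (offset a k)) (hpa : Joins p (offset a j) (offset a j')) :
    Crosses m q p ↔ (0 < j ∧ j < k ∧ k < j') ∨ (0 < j' ∧ j' < k ∧ k < j) := by
  obtain ⟨q1, q2⟩ := q
  obtain ⟨p1, p2⟩ := p
  simp only [Joins, Fin.ext_iff] at hqa hpa
  delta Crosses Xor'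
  simp only [xor_def, Fin.lt_def] at hq hp ⊢
  have ha := a.isLt
  rcases val_offset a hk.le with ⟨hk1, hk2⟩ | ⟨hk1, hk2⟩ <;>
    rcases val_offset a hj.le with ⟨hj1, hj2⟩ | ⟨hj1, hj2⟩ <;>
    rcases val_offset a hj'.le with ⟨hj'1, hj'2⟩ | ⟨hj'1, hj'2⟩ <;>
    rcases hqa with ⟨hq1, hq2⟩ | ⟨hq1, hq2⟩ <;>
    rcases hpa with ⟨hp1, hp2⟩ | ⟨hp1, hp2⟩ <;> omega

section Degree

variable {T : Finset (Fin m × Fin m)} {p q : Fin m × Fin m} {i : Fin m}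

theorem degT_eq_zero_iff : degT T i = 0 ↔ ∀ p ∈ T, ¬(p.1 = i ∨ p.2 = i) := by
  rw [degT, Finset.card_eq_zero, Finset.filter_eq_empty_iff]

theorem eq_of_degT_eq_one (h : degT T i = 1) (hp : p ∈ T) (hq : q ∈ T)
    (hpi : p.1 = i ∨ p.2 = i) (hqi : q.1 = i ∨ q.2 = i) : p = q :=
  Finset.card_le_one.1 h.le p (Finset.mem_filter.2 ⟨hp, hpi⟩) q (Finset.mem_filter.2 ⟨hq, hqi⟩)

theorem two_le_degT (hp : p ∈ T) (hq : q ∈ T) (hpq : p ≠ q)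
    (hpi : p.1 = i ∨ p.2 = i) (hqi : q.1 = i ∨ q.2 = i) : 2 ≤ degT T i :=
  Finset.one_lt_card.2
    ⟨p, Finset.mem_filter.2 ⟨hp, hpi⟩, q, Finset.mem_filter.2 ⟨hq, hqi⟩, hpq⟩

end Degree

end Polygon

namespace IsTriangulation

open Polygon

variable {m : ℕ} {T : Finset (Fin m × Fin m)} (hT : IsTriangulation m T)
include hT

theorem lt_of_mem {p : Fin m × Fin m} (hp : p ∈ T) : p.1 < p.2 :=
  Fin.lt_def.2 (by have := (hT.1 p hp).1; omega)

theorem not_interleaved {p q : Fin m × Fin m} (hq : q ∈ T) (hp : p ∈ T) {a : Fin m}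
    {k j j' : ℕ} (hj0 : 0 < j) (hjk : j < k) (hkj' : k < j') (hj' : j' < m)
    (hqa : Joins q a (offset a k)) (hpa : Joins p (offset a j) (offset a j')) : False :=
  hT.2.1 q hq p hp <| (crosses_iff_of_joins (hT.lt_of_mem hq) (hT.lt_of_mem hp) (by omega)
    (by omega) hj' hqa hpa).2 (Or.inl ⟨hj0, hjk, hkj'⟩)

theorem exists_interleaved (a : Fin m) {k : ℕ} (hk : 2 ≤ k) (hkm : k + 2 ≤ m)
    (h : ∀ q ∈ T, ¬Joins q a (offset a k)) :
    ∃ p ∈ T, ∃ j j', 0 < j ∧ j < k ∧ k < j' ∧ j' < m ∧ Joins p (offset a j) (offset a j') := by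
  obtain ⟨q, hqd, hqa⟩ : ∃ q, IsDiagonal m q ∧ Joins q a (offset a k) := by
    have ha := a.isLt
    rcases val_offset a (j := k) (by omega) with ⟨h1, h2⟩ | ⟨h1, h2⟩
    · exact ⟨(a, offset a k), ⟨by simp only; omega, by simp only; omega⟩, Or.inl ⟨rfl, rfl⟩⟩
    · exact ⟨(offset a k, a), ⟨by simp only; omega, by simp only; omega⟩, Or.inr ⟨rfl, rfl⟩⟩
  obtain ⟨p, hp, hpq⟩ := hT.2.2 q hqd fun hq => h q hq hqa
  obtain ⟨j, hj, hj1⟩ := exists_offset_eq a p.1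
  obtain ⟨j', hj', hj2⟩ := exists_offset_eq a p.2
  have hpa : Joins p (offset a j) (offset a j') := Or.inl ⟨hj1.symm, hj2.symm⟩
  rcases (crosses_iff_of_joins (Fin.lt_def.2 (by have := hqd.1; omega)) (hT.lt_of_mem hp)
    (by omega) hj hj' hqa hpa).1 (crosses_comm.1 hpq) with ⟨h0, hjk, hkj'⟩ | ⟨h0, hjk, hkj'⟩
  · exact ⟨p, hp, j, j', h0, hjk, hkj', hj', hpa⟩
  · exact ⟨p, hp, j', j, h0, hjk, hkj', hj, hpa.symm⟩

theorem exists_joins_of_ear (hm : 4 ≤ m) (b : Fin m) (h : degT T (offset b 1) = 0) :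
    ∃ r ∈ T, Joins r b (offset b 2) := by
  by_contra! hno
  obtain ⟨p, hp, j, j', hj0, hj2, -, -, hpj⟩ := hT.exists_interleaved b le_rfl hm hno
  obtain rfl : j = 1 := by omega
  exact degT_eq_zero_iff.1 h p hp hpj.incident_left

theorem degT_offset_two_ne_zero (hm : 4 ≤ m) {b : Fin m} (h1 : degT T (offset b 1) = 0) :
    degT T (offset b 2) ≠ 0 := by
  intro h2
  obtain ⟨r, hr, hrb⟩ := hT.exists_joins_of_ear hm b h1
  obtain ⟨s, hs, hsb⟩ := hT.exists_joins_of_ear hm (offset b 1) (by rwa [offset_offset])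
  rw [offset_offset] at hsb
  exact hT.not_interleaved hr hs one_pos one_lt_two (by norm_num) (by omega) hrb hsb

theorem two_le_degT_offset_two (hm : 5 ≤ m) {b : Fin m} (h1 : degT T (offset b 1) = 0)
    (h3 : degT T (offset b 3) = 0) : 2 ≤ degT T (offset b 2) := by
  obtain ⟨r, hr, hrb⟩ := hT.exists_joins_of_ear (by omega) b h1
  obtain ⟨s, hs, hsb⟩ := hT.exists_joins_of_ear (by omega) (offset b 2) (by rwa [offset_offset])
  rw [offset_offset] at hsb
  refine two_le_degT hr hs ?_ hrb.incident_right hsb.incident_left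
  rintro rfl
  rcases hrb.eq_or_eq hsb with ⟨h, -⟩ | ⟨h, -⟩
  · exact offset_ne_self b (by norm_num) (by omega) h.symm
  · exact offset_ne_self b (by norm_num) (by omega) h.symm

theorem degT_offset_three_ne_one (hm : 6 ≤ m) {b : Fin m} (h1 : degT T (offset b 1) = 0)
    (h4 : degT T (offset b 4) = 0) (h2 : degT T (offset b 2) = 1) :
    degT T (offset b 3) ≠ 1 := by
  intro h3
  obtain ⟨r, hr, hrb⟩ := hT.exists_joins_of_ear (by omega) b h1
  obtain ⟨s, hs, hsb⟩ := hT.exists_joins_of_ear (by omega) (offset b 3) (by rwa [offset_offset])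
  rw [offset_offset] at hsb
  have hno : ∀ q ∈ T, ¬Joins q b (offset b 3) := by
    intro q hq hqb
    obtain rfl := eq_of_degT_eq_one h3 hq hs hqb.incident_right hsb.incident_left
    rcases hqb.eq_or_eq hsb with ⟨h, -⟩ | ⟨h, -⟩
    · exact offset_ne_self b (by norm_num) (by omega) h.symm
    · exact offset_ne_self b (by norm_num) (by omega) h.symm
  obtain ⟨p, hp, j, j', hj0, hj3, h3j', hj'm, hpj⟩ :=
    hT.exists_interleaved b (k := 3) (by norm_num) (by omega) hno
  interval_cases j
  · exact degT_eq_zero_iff.1 h1 p hp hpj.incident_left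
  · obtain rfl := eq_of_degT_eq_one h2 hp hr hpj.incident_left hrb.incident_right
    rcases hpj.eq_or_eq hrb with ⟨h, -⟩ | ⟨-, h⟩
    · exact offset_ne_self b (by norm_num) (by omega) h
    · exact offset_ne_self b (by omega) hj'm h

end IsTriangulation

namespace Polygon

variable {m : ℕ} (T : Finset (Fin m × Fin m))

def claimLength (e : Fin m) : ℕ :=
  if 2 ≤ degT T (offset e 1) then 1 else if 2 ≤ degT T (offset e 2) then 2 else 3

def claimedSet (e : Fin m) : Finset (Fin m) :=
  (Finset.Icc 1 (claimLength T e)).image (offset e)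

def weight (v : Fin m) : ℕ :=
  if degT T v = 1 then 1 else 3

theorem sum_weight_add_two_mul_card (s : Finset (Fin m)) :
    ∑ v ∈ s, weight T v + 2 * (s.filter fun v => degT T v = 1).card = 3 * s.card := by
  rw [Finset.card_filter, Finset.mul_sum, ← Finset.sum_add_distrib, Finset.card_eq_sum_ones,
    Finset.mul_sum]
  refine Finset.sum_congr rfl fun v _ => ?_
  unfold weight
  split_ifs <;> rfl

theorem three_le_sum_weight_claimedSet (hm : 4 ≤ m) (e : Fin m) :
    3 ≤ ∑ v ∈ claimedSet T e, weight T v := by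
  have hw : ∀ v, 1 ≤ weight T v := fun v => by unfold weight; split_ifs <;> omega
  have hw3 : ∀ v, 2 ≤ degT T v → weight T v = 3 := fun v hv => if_neg (by omega)
  have hlen : claimLength T e ≤ 3 := by unfold claimLength; split_ifs <;> omega
  rw [claimedSet, Finset.sum_image fun i hi j hj h => by
    simp only [Finset.coe_Icc, Set.mem_Icc] at hi hj
    exact (offset_inj e (by omega) (by omega)).1 h]
  unfold claimLength
  split_ifs with h1 h2
  · simp [hw3 _ h1]
  · rw [show Finset.Icc 1 2 = {1, 2} by decide, Finset.sum_pair (by norm_num), hw3 _ h2]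
    omega
  · rw [show Finset.Icc 1 3 = {1, 2, 3} by decide, Finset.sum_insert (by decide),
      Finset.sum_pair (by norm_num)]
    linarith [hw (offset e 1), hw (offset e 2), hw (offset e 3)]

end Polygon

namespace IsTriangulation

open Polygon

variable {m : ℕ} {T : Finset (Fin m × Fin m)} (hT : IsTriangulation m T)
include hT

theorem degT_offset_ne_zero (hm : 6 ≤ m) {e : Fin m} (he : degT T e = 0) {j : ℕ} (hj1 : 1 ≤ j)
    (hj : j ≤ claimLength T e) : degT T (offset e j) ≠ 0 := by
  obtain ⟨b, rfl⟩ := exists_offset_one_eq e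
  have h2 : degT T (offset b 2) ≠ 0 := hT.degT_offset_two_ne_zero (by omega) he
  have h3 (hb2 : ¬2 ≤ degT T (offset b 2)) : degT T (offset b 3) ≠ 0 := fun h0 =>
    hb2 (hT.two_le_degT_offset_two (by omega) he h0)
  simp only [claimLength, offset_offset, Nat.reduceAdd] at hj ⊢
  split_ifs at hj with hb2 hb3 <;> interval_cases j
  exacts [h2, h2, h3 hb2, h2, h3 hb2, fun h0 => hT.degT_offset_three_ne_one hm he h0
    (by omega) (by have := h3 hb2; omega)]

theorem offset_ne_offset_of_lt (hm : 6 ≤ m) {e e' : Fin m} (he : degT T e = 0)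
    (he' : degT T e' = 0) {s s' : ℕ} (hss' : s < s') (hs' : s' ≤ claimLength T e') :
    offset e' s' ≠ offset e s := by
  intro h
  rw [← Nat.sub_add_cancel hss'.le, ← offset_offset] at h
  exact hT.degT_offset_ne_zero hm he' (by omega) (by omega) (offset_left_cancel h ▸ he)

theorem disjoint_claimedSet (hm : 6 ≤ m) {e e' : Fin m} (he : degT T e = 0)
    (he' : degT T e' = 0) (hne : e ≠ e') : Disjoint (claimedSet T e) (claimedSet T e') := by
  simp only [claimedSet, Finset.disjoint_left, Finset.mem_image, Finset.mem_Icc]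
  rintro _ ⟨s, ⟨-, hs⟩, rfl⟩ ⟨s', ⟨-, hs'⟩, h⟩
  rcases lt_trichotomy s s' with hlt | rfl | hgt
  · exact hT.offset_ne_offset_of_lt hm he he' hlt hs' h
  · exact hne (offset_left_cancel h).symm
  · exact hT.offset_ne_offset_of_lt hm he' he hgt hs h.symm

theorem three_mul_card_ears_le (hm : 6 ≤ m) :
    3 * (Finset.univ.filter fun e => degT T e = 0).card ≤
      ∑ v ∈ Finset.univ.filter (fun v => degT T v ≠ 0), weight T v := by
  set ears := Finset.univ.filter fun e => degT T e = 0
  have hdisj : (ears : Set (Fin m)).PairwiseDisjoint (claimedSet T) :=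
    fun e he e' he' hne => hT.disjoint_claimedSet hm (Finset.mem_filter.1 he).2
      (Finset.mem_filter.1 he').2 hne
  have hsub : ears.biUnion (claimedSet T) ⊆ Finset.univ.filter fun v => degT T v ≠ 0 := by
    intro v hv
    obtain ⟨e, he, hv⟩ := Finset.mem_biUnion.1 hv
    obtain ⟨j, hj, rfl⟩ := Finset.mem_image.1 hv
    rw [Finset.mem_Icc] at hj
    exact Finset.mem_filter.2
      ⟨Finset.mem_univ _, hT.degT_offset_ne_zero hm (Finset.mem_filter.1 he).2 hj.1 hj.2⟩
  calc 3 * ears.card = ∑ _e ∈ ears, 3 := by rw [Finset.sum_const, smul_eq_mul, mul_comm]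
    _ ≤ ∑ e ∈ ears, ∑ v ∈ claimedSet T e, weight T v :=
      Finset.sum_le_sum fun e _ => three_le_sum_weight_claimedSet T (by omega) e
    _ = ∑ v ∈ ears.biUnion (claimedSet T), weight T v := (Finset.sum_biUnion hdisj).symm
    _ ≤ _ := Finset.sum_le_sum_of_subset hsub

end IsTriangulation

open Polygon in
theorem ears_and_degree_one_bound {m : ℕ} (hm : 6 ≤ m)
    (T : Finset (Fin m × Fin m)) (hT : IsTriangulation m T) :
    6 * (Finset.univ.filter (fun i : Fin m => degT T i = 0)).card +
      2 * (Finset.univ.filter (fun i : Fin m => degT T i = 1)).card ≤ 3 * m := by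
  have hears := hT.three_mul_card_ears_le hm
  have hsplit := Finset.card_filter_add_card_filter_not (s := Finset.univ)
    fun i : Fin m => degT T i = 0
  have hweight := sum_weight_add_two_mul_card T (Finset.univ.filter fun v => degT T v ≠ 0)
  rw [Finset.filter_filter] at hweight
  rw [Finset.card_univ, Fintype.card_fin] at hsplit
  have hdeg1 : (Finset.univ.filter fun v => degT T v ≠ 0 ∧ degT T v = 1) =
      Finset.univ.filter fun v => degT T v = 1 := by
    ext v; simp only [Finset.mem_filter, Finset.mem_univ, true_and]; omega
  rw [hdeg1] at hweight
  simp only [ne_eq] at hears hweight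
  omega
end
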